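/- arXiv:2207.05945 — 4 statements merged into one kernel-verified Lean document; each statement's English description precedes it below -/
import Mathlib

section
/- Let $p \in [1,2]$ and let $A \in \mathbb{R}^{n \times d}$ have full column rank. If all leverage scores of $A$ are at most $C > 0$, i.e., $a_i^\top (A^\top A)^{-1} a_i \le C$ for all $i$, then for every $j \ge 1$, the $j$-th iterate of the Lewis weight iteration started at $W^{(0)} = I_n$ satisfies $W^{(j)} \preceq C^{1-(1-p/2)^j} I_n$. -/
/-!
Write `q = 1 - p / 2`. If every weight on a nonzero row is at most `M`, then, since
`1 - 2 / p ≤ 0`, the reweighted Gram matrix `Aᵀ W^{1-2/p} A` dominates `M^{1-2/p} AᵀA` in the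
Loewner order. Inversion reverses this, so `aᵢᵀ (Aᵀ W^{1-2/p} A)⁻¹ aᵢ` is at most `M^{2/p-1}`
times the leverage score of row `i`, hence at most `M^{2/p-1} C`, and the next weights are at
most `(M^{2/p-1} C)^{p/2}`. For `M = C^{1-q^j}` this is `C^{1-q^{j+1}}`, and induction from
`W⁽⁰⁾ = 1 = C^0` gives the bound.
-/

open Matrix

namespace Matrix

variable {ι κ : Type*} [Fintype κ]

lemma mulVec_injective_of_rank_eq_card {K : Type*} [Field K] {A : Matrix ι κ K}
    (hA : A.rank = Fintype.card κ) : Function.Injective A.mulVec := by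
  rw [mulVec_injective_iff, linearIndependent_iff_card_eq_finrank_span, ← hA,
    rank_eq_finrank_span_cols]
  rfl

variable [Fintype ι]

lemma dotProduct_transpose_mul_diagonal_mul_mulVec {R : Type*} [CommSemiring R] [DecidableEq ι]
    (A : Matrix ι κ R) (w : ι → R) (y : κ → R) :
    y ⬝ᵥ (Aᵀ * diagonal w * A) *ᵥ y = ∑ t, w t * (A *ᵥ y) t ^ 2 := by
  rw [← mulVec_mulVec, ← mulVec_mulVec, dotProduct_mulVec, vecMul_transpose, dotProduct]
  refine Finset.sum_congr rfl fun t _ => ?_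
  rw [mulVec_diagonal]
  ring

lemma posDef_transpose_mul_self {A : Matrix ι κ ℝ} (hA : Function.Injective A.mulVec) :
    (Aᵀ * A).PosDef := by
  simpa using PosDef.conjTranspose_mul_self A hA

section Weighted

variable [DecidableEq ι] {A : Matrix ι κ ℝ} {w : ι → ℝ} {c : ℝ}

lemma mul_dotProduct_transpose_mul_self_mulVec_le (hw : ∀ t, A t ≠ 0 → c ≤ w t) (y : κ → ℝ) :
    c * (y ⬝ᵥ (Aᵀ * A) *ᵥ y) ≤ y ⬝ᵥ (Aᵀ * diagonal w * A) *ᵥ y := by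
  have hA := dotProduct_transpose_mul_diagonal_mul_mulVec A (fun _ => 1) y
  simp only [diagonal_one, Matrix.mul_one, one_mul] at hA
  rw [hA, dotProduct_transpose_mul_diagonal_mul_mulVec, Finset.mul_sum]
  refine Finset.sum_le_sum fun t _ => ?_
  by_cases ht : A t = 0
  · have : (A *ᵥ y) t = 0 := by simp [mulVec, ht]
    simp [this]
  · simpa using mul_le_mul_of_nonneg_right (hw t ht) (sq_nonneg ((A *ᵥ y) t))

lemma posDef_transpose_mul_diagonal_mul (hA : Function.Injective A.mulVec) (hc : 0 < c)
    (hw : ∀ t, A t ≠ 0 → c ≤ w t) : (Aᵀ * diagonal w * A).PosDef := by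
  refine PosDef.of_dotProduct_mulVec_pos ?_ fun y hy => ?_
  · simpa using isHermitian_conjTranspose_mul_mul A (isHermitian_diagonal w)
  · have hpos := (posDef_transpose_mul_self hA).dotProduct_mulVec_pos hy
    rw [star_trivial] at hpos ⊢
    exact (mul_pos hc hpos).trans_le (mul_dotProduct_transpose_mul_self_mulVec_le hw y)

end Weighted

variable [DecidableEq κ]

lemma PosDef.two_mul_dotProduct_sub_le_dotProduct_inv_mulVec {B : Matrix κ κ ℝ} (hB : B.PosDef)
    (x y : κ → ℝ) : 2 * (y ⬝ᵥ x) - y ⬝ᵥ B *ᵥ y ≤ x ⬝ᵥ B⁻¹ *ᵥ x := by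
  set v := B⁻¹ *ᵥ x
  have hv : B *ᵥ v = x := by
    rw [mulVec_mulVec, mul_nonsing_inv _ ((isUnit_iff_isUnit_det B).mp hB.isUnit), one_mulVec]
  have hvB : v ᵥ* B = x := by
    rw [← mulVec_transpose, ← conjTranspose_eq_transpose_of_trivial, hB.isHermitian.eq, hv]
  have hnonneg := hB.posSemidef.dotProduct_mulVec_nonneg (y - v)
  simp only [star_trivial, mulVec_sub, dotProduct_sub, sub_dotProduct, hv] at hnonneg
  rw [dotProduct_mulVec v B y, hvB] at hnonneg
  rw [dotProduct_comm x v]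
  linarith [dotProduct_comm x y]

lemma mul_dotProduct_inv_mulVec_le {B₁ B₂ : Matrix κ κ ℝ} (h₁ : B₁.PosDef) (h₂ : IsUnit B₂)
    {c : ℝ} (hc : 0 ≤ c) (h : ∀ y, c * (y ⬝ᵥ B₁ *ᵥ y) ≤ y ⬝ᵥ B₂ *ᵥ y) (x : κ → ℝ) :
    c * (x ⬝ᵥ B₂⁻¹ *ᵥ x) ≤ x ⬝ᵥ B₁⁻¹ *ᵥ x := by
  -- `x ⬝ᵥ B⁻¹ *ᵥ x` is the maximum of `2 (y ⬝ᵥ x) - y ⬝ᵥ B *ᵥ y`, attained at `y = B⁻¹ *ᵥ x`.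
  set u := B₂⁻¹ *ᵥ x
  have hu : B₂ *ᵥ u = x := by
    rw [mulVec_mulVec, mul_nonsing_inv _ ((isUnit_iff_isUnit_det B₂).mp h₂), one_mulVec]
  have hvar := h₁.two_mul_dotProduct_sub_le_dotProduct_inv_mulVec x (c • u)
  have hcomp := mul_le_mul_of_nonneg_left (h u) hc
  simp only [mulVec_smul, dotProduct_smul, smul_dotProduct, smul_eq_mul] at hvar
  rw [hu] at hcomp
  rw [dotProduct_comm x u]
  linarith

lemma dotProduct_inv_transpose_mul_diagonal_mul_mulVec_le [DecidableEq ι] {A : Matrix ι κ ℝ}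
    (hA : Function.Injective A.mulVec) {w : ι → ℝ} {c : ℝ} (hc : 0 < c)
    (hw : ∀ t, A t ≠ 0 → c ≤ w t) (x : κ → ℝ) :
    x ⬝ᵥ (Aᵀ * diagonal w * A)⁻¹ *ᵥ x ≤ c⁻¹ * (x ⬝ᵥ (Aᵀ * A)⁻¹ *ᵥ x) := by
  rw [le_inv_mul_iff₀ hc]
  exact mul_dotProduct_inv_mulVec_le (posDef_transpose_mul_self hA)
    (posDef_transpose_mul_diagonal_mul hA hc hw).isUnit hc.le
    (mul_dotProduct_transpose_mul_self_mulVec_le hw) x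

end Matrix

lemma lewis_exponent_step {C p e : ℝ} (hC : 0 < C) (hp : p ≠ 0) :
    (((C ^ e) ^ (1 - 2 / p))⁻¹ * C) ^ (p / 2) = C ^ (1 - (1 - p / 2) * (1 - e)) := by
  rw [← Real.rpow_mul hC.le, ← Real.rpow_neg hC.le, ← Real.rpow_add_one hC.ne',
    ← Real.rpow_mul hC.le]
  congr 1
  field_simp
  ring

/-- If all leverage scores of `A` are at most `C`, then the `j`-th Lewis weight iterate
(started at the identity) satisfies `W⁽ʲ⁾ ⪯ C^{1-(1-p/2)^j} Iₙ` (entrywise on the diagonal). -/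
theorem stmt_3 {n d : ℕ} (p : ℝ) (hp1 : 1 ≤ p) (hp2 : p ≤ 2)
    (A : Matrix (Fin n) (Fin d) ℝ) (hA : A.rank = d)
    (C : ℝ) (hC : 0 < C)
    (hlev : ∀ i, A i ⬝ᵥ ((Aᵀ * A)⁻¹).mulVec (A i) ≤ C)
    (W : ℕ → Fin n → ℝ)
    (hW0 : ∀ i, W 0 i = 1)
    (hWiter : ∀ j i, W (j + 1) i =
      (A i ⬝ᵥ ((Aᵀ * Matrix.diagonal (fun t => W j t ^ (1 - 2 / p)) * A)⁻¹).mulVec (A i))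
        ^ (p / 2)) :
    ∀ j : ℕ, 1 ≤ j → ∀ i, W j i ≤ C ^ (1 - (1 - p / 2) ^ j) := by
  have hp : 0 < p := by linarith
  have hexp : 1 - 2 / p ≤ 0 := by rw [sub_nonpos, one_le_div hp]; exact hp2
  have hinj := mulVec_injective_of_rank_eq_card (A := A) (by simpa using hA)
  suffices h : ∀ j i, (A i ≠ 0 → 0 < W j i) ∧ W j i ≤ C ^ (1 - (1 - p / 2) ^ j) from
    fun j _ i => (h j i).2
  -- Zero rows get weight `0 ^ (p / 2) = 0`, whose reweighting `0 ^ (1 - 2 / p)` is junk; they do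
  -- not contribute to the Gram matrix, so positivity is only tracked on nonzero rows.
  intro j
  induction j with
  | zero => simp [hW0]
  | succ j ih =>
    set M := C ^ (1 - (1 - p / 2) ^ j)
    have hc : 0 < M ^ (1 - 2 / p) := by positivity
    have hw : ∀ t, A t ≠ 0 → M ^ (1 - 2 / p) ≤ W j t ^ (1 - 2 / p) := fun t ht =>
      Real.rpow_le_rpow_of_nonpos ((ih t).1 ht) (ih t).2 hexp
    have hB := (posDef_transpose_mul_diagonal_mul hinj hc hw).inv
    intro i
    rw [hWiter]
    refine ⟨fun hi => Real.rpow_pos_of_pos (hB.dotProduct_mulVec_pos hi) _, ?_⟩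
    calc _ ≤ ((M ^ (1 - 2 / p))⁻¹ * C) ^ (p / 2) := by
          refine Real.rpow_le_rpow ?_ ?_ (by positivity)
          · exact hB.posSemidef.dotProduct_mulVec_nonneg _
          · exact (dotProduct_inv_transpose_mul_diagonal_mul_mulVec_le hinj hc hw (A i)).trans
              (mul_le_mul_of_nonneg_left (hlev i) (inv_nonneg.mpr hc.le))
      _ = C ^ (1 - (1 - p / 2) ^ (j + 1)) := by
          rw [lewis_exponent_step hC hp.ne', sub_sub_cancel, pow_succ']
end

section
/- Let $p \in [1,2]$ and $A \in \mathbb{R}^{n \times d}$ have full column rank with $\ell_p$ Lewis weights $\overline{w}_1, \dots, \overline{w}_n$. Suppose positive weights $w_1, \dots, w_n$ satisfy $\alpha w_i^{2/p} \le a_i^\top (\sum_j w_j^{1-2/p} a_j a_j^\top)^{-1} a_i \le \beta w_i^{2/p}$ for all $i$, where $0 < \alpha \le \beta$. Then $\alpha w_i \le \overline{w}_i \le \beta w_i$ for all $i$. -/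
/-!
Put `q = 2 / p ≥ 1` and let `t` be the largest ratio `w̄ⱼ / wⱼ`. Since `1 - q ≤ 0`, the bound
`w̄ ≤ t w` gives `w̄^(1-q) ≥ t^(1-q) w^(1-q)` entrywise, hence
`Aᵀ W̄^(1-q) A ≥ t^(1-q) Aᵀ W^(1-q) A` in the Loewner order, and the inverses compare the other
way round. At a row where the ratio `t` is attained, the fixed-point equation for `w̄` and the
upper sandwich bound then give `t^q wᵢ^q = w̄ᵢ^q ≤ t^(q-1) β wᵢ^q`, that is `t ≤ β`. The lower
bound is the same argument at the smallest ratio.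
-/

open Matrix

theorem Matrix.transpose_mul_diagonal_mul_eq_sum_vecMulVec {ι κ : Type*} [Fintype ι]
    [DecidableEq ι] (A : Matrix ι κ ℝ) (f : ι → ℝ) :
    Aᵀ * diagonal f * A = ∑ j, f j • vecMulVec (A j) (A j) := by
  ext k l
  rw [mul_apply, sum_apply]
  simp only [mul_diagonal, transpose_apply, smul_apply, vecMulVec_apply, smul_eq_mul]
  exact Finset.sum_congr rfl fun j _ => by ring

section WeightedGram

variable {ι κ : Type*} [Fintype ι] [DecidableEq ι] [Fintype κ]

theorem Matrix.posDef_transpose_mul_diagonal_mul_s5 {A : Matrix ι κ ℝ}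
    (hA : Function.Injective A.mulVec) {f : ι → ℝ} (hf : ∀ j, 0 < f j) :
    (Aᵀ * diagonal f * A).PosDef := by
  simpa [conjTranspose_eq_transpose_of_trivial] using
    (PosDef.diagonal hf).conjTranspose_mul_mul_same hA

theorem Matrix.posSemidef_transpose_mul_diagonal_mul_sub (A : Matrix ι κ ℝ) {f g : ι → ℝ}
    (hfg : ∀ j, f j ≤ g j) :
    (Aᵀ * diagonal g * A - Aᵀ * diagonal f * A).PosSemidef := by
  rw [← Matrix.sub_mul, ← Matrix.mul_sub, diagonal_sub]
  simpa [conjTranspose_eq_transpose_of_trivial] using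
    (PosSemidef.diagonal fun j => sub_nonneg.mpr (hfg j)).conjTranspose_mul_mul_same A

variable [DecidableEq κ]

-- Expand `0 ≤ (N⁻¹x - M⁻¹x)ᵀ M (N⁻¹x - M⁻¹x)` and bound `M` by `N` in the first term.
theorem Matrix.dotProduct_inv_mulVec_le {M N : Matrix κ κ ℝ} (hM : M.PosDef)
    (hMN : (N - M).PosSemidef) (x : κ → ℝ) :
    x ⬝ᵥ N⁻¹ *ᵥ x ≤ x ⬝ᵥ M⁻¹ *ᵥ x := by
  have hN : N.PosDef := by simpa using hM.add_posSemidef hMN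
  set y := N⁻¹ *ᵥ x
  set z := M⁻¹ *ᵥ x
  have hNy : N *ᵥ y = x := by
    simp [y, mulVec_mulVec, mul_nonsing_inv _ ((isUnit_iff_isUnit_det N).mp hN.isUnit)]
  have hMz : M *ᵥ z = x := by
    simp [z, mulVec_mulVec, mul_nonsing_inv _ ((isUnit_iff_isUnit_det M).mp hM.isUnit)]
  have hsymm : z ⬝ᵥ M *ᵥ y = y ⬝ᵥ M *ᵥ z := by
    rw [dotProduct_mulVec, ← mulVec_transpose, ← conjTranspose_eq_transpose_of_trivial,
      hM.isHermitian.eq, dotProduct_comm]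
  have hpos : 0 ≤ (y - z) ⬝ᵥ M *ᵥ (y - z) := by
    simpa using hM.posSemidef.dotProduct_mulVec_nonneg (y - z)
  have hle : 0 ≤ y ⬝ᵥ (N - M) *ᵥ y := by simpa using hMN.dotProduct_mulVec_nonneg y
  simp only [mulVec_sub, sub_mulVec, sub_dotProduct, dotProduct_sub, hsymm] at hpos hle
  rw [hMz] at hpos
  rw [hNy] at hle
  linarith [dotProduct_comm x y, dotProduct_comm x z]

noncomputable def weightedLeverage (A : Matrix ι κ ℝ) (f : ι → ℝ) (i : ι) : ℝ :=
  A i ⬝ᵥ (Aᵀ * diagonal f * A)⁻¹ *ᵥ A i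

variable {A : Matrix ι κ ℝ} {f g : ι → ℝ}

theorem weightedLeverage_nonneg (hA : Function.Injective A.mulVec) (hf : ∀ j, 0 < f j)
    (i : ι) : 0 ≤ weightedLeverage A f i := by
  simpa [weightedLeverage] using
    (posDef_transpose_mul_diagonal_mul_s5 hA hf).inv.posSemidef.dotProduct_mulVec_nonneg (A i)

theorem weightedLeverage_anti (hA : Function.Injective A.mulVec) (hf : ∀ j, 0 < f j)
    (hfg : ∀ j, f j ≤ g j) (i : ι) :
    weightedLeverage A g i ≤ weightedLeverage A f i :=
  dotProduct_inv_mulVec_le (posDef_transpose_mul_diagonal_mul_s5 hA hf)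
    (posSemidef_transpose_mul_diagonal_mul_sub A hfg) (A i)

theorem weightedLeverage_smul (hA : Function.Injective A.mulVec) (hf : ∀ j, 0 < f j) {c : ℝ}
    (hc : c ≠ 0) (i : ι) : weightedLeverage A (c • f) i = c⁻¹ * weightedLeverage A f i := by
  have hdet := (isUnit_iff_isUnit_det (Aᵀ * diagonal f * A)).mp
    (posDef_transpose_mul_diagonal_mul_s5 hA hf).isUnit
  have := invertibleOfNonzero hc
  rw [weightedLeverage, weightedLeverage, diagonal_smul, Matrix.mul_smul, Matrix.smul_mul,
    inv_smul _ _ hdet, invOf_eq_inv, smul_mulVec, dotProduct_smul, smul_eq_mul]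

section LewisComparison

variable {q : ℝ} {w wbar : ι → ℝ}

theorem weightedLeverage_rpow_le_of_le_mul (hA : Function.Injective A.mulVec) (hq : 1 ≤ q)
    (hw : ∀ j, 0 < w j) (hwbar : ∀ j, 0 < wbar j) {c : ℝ} (hc : 0 < c)
    (h : ∀ j, wbar j ≤ c * w j) (i : ι) :
    weightedLeverage A (fun j => wbar j ^ (1 - q)) i ≤
      c ^ (q - 1) * weightedLeverage A (fun j => w j ^ (1 - q)) i := by
  have hscaled : ∀ j, (c ^ (1 - q) • fun j => w j ^ (1 - q)) j ≤ wbar j ^ (1 - q) := fun j => by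
    rw [Pi.smul_apply, smul_eq_mul, ← Real.mul_rpow hc.le (hw j).le]
    exact Real.rpow_le_rpow_of_nonpos (hwbar j) (h j) (by linarith)
  calc weightedLeverage A (fun j => wbar j ^ (1 - q)) i
      ≤ weightedLeverage A (c ^ (1 - q) • fun j => w j ^ (1 - q)) i :=
        weightedLeverage_anti hA
          (fun j => mul_pos (Real.rpow_pos_of_pos hc _) (Real.rpow_pos_of_pos (hw j) _)) hscaled i
    _ = c ^ (q - 1) * weightedLeverage A (fun j => w j ^ (1 - q)) i := by
        rw [weightedLeverage_smul hA (fun j => Real.rpow_pos_of_pos (hw j) _)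
          (Real.rpow_pos_of_pos hc _).ne', ← Real.rpow_neg hc.le, neg_sub]

theorem rpow_mul_le_weightedLeverage_of_mul_le (hA : Function.Injective A.mulVec) (hq : 1 ≤ q)
    (hw : ∀ j, 0 < w j) (hwbar : ∀ j, 0 < wbar j) {c : ℝ} (hc : 0 < c)
    (h : ∀ j, c * w j ≤ wbar j) (i : ι) :
    c ^ (q - 1) * weightedLeverage A (fun j => w j ^ (1 - q)) i ≤
      weightedLeverage A (fun j => wbar j ^ (1 - q)) i := by
  have hscaled : ∀ j, wbar j ^ (1 - q) ≤ (c ^ (1 - q) • fun j => w j ^ (1 - q)) j := fun j => by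
    rw [Pi.smul_apply, smul_eq_mul, ← Real.mul_rpow hc.le (hw j).le]
    exact Real.rpow_le_rpow_of_nonpos (mul_pos hc (hw j)) (h j) (by linarith)
  calc c ^ (q - 1) * weightedLeverage A (fun j => w j ^ (1 - q)) i
      = weightedLeverage A (c ^ (1 - q) • fun j => w j ^ (1 - q)) i := by
        rw [weightedLeverage_smul hA (fun j => Real.rpow_pos_of_pos (hw j) _)
          (Real.rpow_pos_of_pos hc _).ne', ← Real.rpow_neg hc.le, neg_sub]
    _ ≤ weightedLeverage A (fun j => wbar j ^ (1 - q)) i :=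
        weightedLeverage_anti hA (fun j => Real.rpow_pos_of_pos (hwbar j) _) hscaled i

theorem le_mul_of_weightedLeverage_le (hA : Function.Injective A.mulVec) (hq : 1 ≤ q)
    (hw : ∀ j, 0 < w j) (hwbar : ∀ j, 0 < wbar j)
    (hfix : ∀ i, wbar i ^ q = weightedLeverage A (fun j => wbar j ^ (1 - q)) i) {β : ℝ}
    (hβ : ∀ i, weightedLeverage A (fun j => w j ^ (1 - q)) i ≤ β * w i ^ q) (i : ι) :
    wbar i ≤ β * w i := by
  obtain ⟨i₀, -, hi₀⟩ :=
    Finset.univ.exists_max_image (fun j => wbar j / w j) ⟨i, Finset.mem_univ i⟩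
  set t := wbar i₀ / w i₀
  have ht : 0 < t := div_pos (hwbar i₀) (hw i₀)
  have hbound : ∀ j, wbar j ≤ t * w j := fun j =>
    (div_le_iff₀ (hw j)).mp (hi₀ j (Finset.mem_univ j))
  have key : t ^ (q - 1) * t * w i₀ ^ q ≤ t ^ (q - 1) * β * w i₀ ^ q := calc
    t ^ (q - 1) * t * w i₀ ^ q = wbar i₀ ^ q := by
      rw [← Real.rpow_add_one ht.ne', sub_add_cancel, ← Real.mul_rpow ht.le (hw i₀).le,
        div_mul_cancel₀ _ (hw i₀).ne']
    _ ≤ t ^ (q - 1) * weightedLeverage A (fun j => w j ^ (1 - q)) i₀ :=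
      hfix i₀ ▸ weightedLeverage_rpow_le_of_le_mul hA hq hw hwbar ht hbound i₀
    _ ≤ t ^ (q - 1) * β * w i₀ ^ q := by rw [mul_assoc]; gcongr; exact hβ i₀
  have htβ : t ≤ β := le_of_mul_le_mul_left
    (le_of_mul_le_mul_right key (Real.rpow_pos_of_pos (hw i₀) _)) (Real.rpow_pos_of_pos ht _)
  exact (hbound i).trans (by gcongr; exact (hw i).le)

theorem mul_le_of_le_weightedLeverage (hA : Function.Injective A.mulVec) (hq : 1 ≤ q)
    (hw : ∀ j, 0 < w j) (hwbar : ∀ j, 0 < wbar j)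
    (hfix : ∀ i, wbar i ^ q = weightedLeverage A (fun j => wbar j ^ (1 - q)) i) {α : ℝ}
    (hα : ∀ i, α * w i ^ q ≤ weightedLeverage A (fun j => w j ^ (1 - q)) i) (i : ι) :
    α * w i ≤ wbar i := by
  obtain ⟨i₀, -, hi₀⟩ :=
    Finset.univ.exists_min_image (fun j => wbar j / w j) ⟨i, Finset.mem_univ i⟩
  set s := wbar i₀ / w i₀
  have hs : 0 < s := div_pos (hwbar i₀) (hw i₀)
  have hbound : ∀ j, s * w j ≤ wbar j := fun j =>
    (le_div_iff₀ (hw j)).mp (hi₀ j (Finset.mem_univ j))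
  have key : s ^ (q - 1) * α * w i₀ ^ q ≤ s ^ (q - 1) * s * w i₀ ^ q := calc
    s ^ (q - 1) * α * w i₀ ^ q
        ≤ s ^ (q - 1) * weightedLeverage A (fun j => w j ^ (1 - q)) i₀ := by
      rw [mul_assoc]; gcongr; exact hα i₀
    _ ≤ wbar i₀ ^ q :=
      hfix i₀ ▸ rpow_mul_le_weightedLeverage_of_mul_le hA hq hw hwbar hs hbound i₀
    _ = s ^ (q - 1) * s * w i₀ ^ q := by
      rw [← Real.rpow_add_one hs.ne', sub_add_cancel, ← Real.mul_rpow hs.le (hw i₀).le,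
        div_mul_cancel₀ _ (hw i₀).ne']
  have hαs : α ≤ s := le_of_mul_le_mul_left
    (le_of_mul_le_mul_right key (Real.rpow_pos_of_pos (hw i₀) _)) (Real.rpow_pos_of_pos hs _)
  exact le_trans (by gcongr; exact (hw i).le) (hbound i)

end LewisComparison

end WeightedGram

theorem stmt_5_general {n d : ℕ} (p : ℝ) (hp1 : 1 ≤ p) (hp2 : p ≤ 2)
    (A : Matrix (Fin n) (Fin d) ℝ) (hA : A.rank = d)
    (α β : ℝ)
    (w : Fin n → ℝ) (hwpos : ∀ i, 0 < w i)
    (hsand : ∀ i,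
      α * w i ^ ((2 : ℝ) / p) ≤
        A i ⬝ᵥ ((∑ j, (w j ^ (1 - 2 / p)) • Matrix.vecMulVec (A j) (A j))⁻¹).mulVec (A i) ∧
      A i ⬝ᵥ ((∑ j, (w j ^ (1 - 2 / p)) • Matrix.vecMulVec (A j) (A j))⁻¹).mulVec (A i) ≤
        β * w i ^ ((2 : ℝ) / p))
    (wbar : Fin n → ℝ) (hwbarpos : ∀ i, 0 < wbar i)
    (hwbar : ∀ i, wbar i =
      (A i ⬝ᵥ ((Aᵀ * Matrix.diagonal (fun t => wbar t ^ (1 - 2 / p)) * A)⁻¹).mulVec (A i))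
        ^ (p / 2)) :
    ∀ i, α * w i ≤ wbar i ∧ wbar i ≤ β * w i := by
  have hp : 0 < p := by linarith
  have hq : 1 ≤ 2 / p := by rw [le_div_iff₀ hp]; linarith
  have hinj : Function.Injective A.mulVec :=
    mulVec_injective_iff.mpr <| linearIndependent_iff_card_eq_finrank_span.mpr <| by
      rw [Set.finrank, ← rank_eq_finrank_span_cols, hA, Fintype.card_fin]
  simp only [← transpose_mul_diagonal_mul_eq_sum_vecMulVec] at hsand
  have hfix : ∀ i, wbar i ^ (2 / p) = weightedLeverage A (fun j => wbar j ^ (1 - 2 / p)) i := by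
    intro i
    have hi : wbar i = weightedLeverage A (fun j => wbar j ^ (1 - 2 / p)) i ^ (p / 2) := hwbar i
    rw [hi, ← Real.rpow_mul (weightedLeverage_nonneg hinj
      (fun j => Real.rpow_pos_of_pos (hwbarpos j) _) i), div_mul_div_cancel₀ (by norm_num),
      div_self hp.ne', Real.rpow_one]
  exact fun i =>
    ⟨mul_le_of_le_weightedLeverage hinj hq hwpos hwbarpos hfix (fun i => (hsand i).1) i,
      le_mul_of_weightedLeverage_le hinj hq hwpos hwbarpos hfix (fun i => (hsand i).2) i⟩

/-- If positive weights `w` satisfy the two-sided fixed-point sandwich condition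
`α wᵢ^{2/p} ≤ aᵢᵀ (∑ⱼ wⱼ^{1-2/p} aⱼ aⱼᵀ)⁻¹ aᵢ ≤ β wᵢ^{2/p}`, then the true Lewis weights
`w̄` of `A` satisfy `α wᵢ ≤ w̄ᵢ ≤ β wᵢ`. -/
theorem stmt_5 {n d : ℕ} (p : ℝ) (hp1 : 1 ≤ p) (hp2 : p ≤ 2)
    (A : Matrix (Fin n) (Fin d) ℝ) (hA : A.rank = d)
    (α β : ℝ) (hα : 0 < α) (hαβ : α ≤ β)
    (w : Fin n → ℝ) (hwpos : ∀ i, 0 < w i)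
    (hsand : ∀ i,
      α * w i ^ ((2 : ℝ) / p) ≤
        A i ⬝ᵥ ((∑ j, (w j ^ (1 - 2 / p)) • Matrix.vecMulVec (A j) (A j))⁻¹).mulVec (A i) ∧
      A i ⬝ᵥ ((∑ j, (w j ^ (1 - 2 / p)) • Matrix.vecMulVec (A j) (A j))⁻¹).mulVec (A i) ≤
        β * w i ^ ((2 : ℝ) / p))
    (wbar : Fin n → ℝ) (hwbarpos : ∀ i, 0 < wbar i)
    (hwbar : ∀ i, wbar i =
      (A i ⬝ᵥ ((Aᵀ * Matrix.diagonal (fun t => wbar t ^ (1 - 2 / p)) * A)⁻¹).mulVec (A i))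
        ^ (p / 2)) :
    ∀ i, α * w i ≤ wbar i ∧ wbar i ≤ β * w i :=
  stmt_5_general p hp1 hp2 A hA α β w hwpos hsand wbar hwbarpos hwbar
end

section
/- Let $p \in [1,2]$ and $A \in \mathbb{R}^{n \times d}$ have full column rank. Let $B \in \mathbb{R}^{n \times d}$ have the same rows as $A$ except row $j$ is rescaled by a factor $\alpha \in [0,1]$, i.e., $b_j = \alpha a_j$. Then for all $i \ne j$, $w_i(B) \ge w_i(A)$. -/
/-!
Put `g = w ^ (1 - 2/p)`, antitone in `w` since `p ≤ 2`, and write `B = diag(s) A`, so that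
`Bᵀ diag(g_B) B = Aᵀ diag(s² g_B) A`. If `κ s_i² g_B,i ≤ g_A,i` for all `i`, then
`κ · Bᵀ diag(g_B) B ≤ Aᵀ diag(g_A) A` in the Loewner order, and inverting gives
`(κ s_i²)^{p/2} w_i(A) ≤ w_i(B)` for every row. Take for `κ` the largest such constant, attained
at a row `i₀`. There `g_A = κ s² g_B` and `(κ s²)^{p/2} w_A ≤ w_B` together force `κ s² ≥ 1`, so
`κ ≥ 1` and `w_i(B) ≥ s_i^p w_i(A)`; rows with `s_i = 1` give the claim.
-/

open Matrix

/-- The `ℓ_p` Lewis weights of `A`, as a predicate: positive weights satisfying the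
fixed-point equation `wᵢ = (aᵢᵀ (Aᵀ W^{1-2/p} A)⁻¹ aᵢ)^{p/2}`. -/
def IsLewisWeights (p : ℝ) {n d : ℕ} (A : Matrix (Fin n) (Fin d) ℝ)
    (w : Fin n → ℝ) : Prop :=
  (∀ i, 0 < w i) ∧
  ∀ i, w i =
    (A i ⬝ᵥ ((Aᵀ * Matrix.diagonal (fun t => w t ^ (1 - 2 / p)) * A)⁻¹).mulVec (A i))
      ^ (p / 2)

theorem Matrix.dotProduct_mulVec_transpose_mul_diagonal_mul {m n R : Type*} [Fintype m]
    [Fintype n] [DecidableEq m] [CommSemiring R] (A : Matrix m n R) (g : m → R) (x : n → R) :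
    x ⬝ᵥ (Aᵀ * diagonal g * A) *ᵥ x = ∑ i, g i * (A *ᵥ x) i ^ 2 := by
  rw [← mulVec_mulVec, ← mulVec_mulVec, dotProduct_mulVec, vecMul_transpose]
  simp only [dotProduct, mulVec_diagonal]
  exact Finset.sum_congr rfl fun i _ => by ring

theorem Matrix.mul_dotProduct_inv_mulVec_le_s7 {ι : Type*} [Fintype ι] [DecidableEq ι]
    {P Q : Matrix ι ι ℝ} (hP : IsUnit P.det) (hQ : Q.PosDef) {c : ℝ} (hc : 0 ≤ c)
    (hle : ∀ x, c * (x ⬝ᵥ Q *ᵥ x) ≤ x ⬝ᵥ P *ᵥ x) (x : ι → ℝ) :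
    c * (x ⬝ᵥ P⁻¹ *ᵥ x) ≤ x ⬝ᵥ Q⁻¹ *ᵥ x := by
  set y := P⁻¹ *ᵥ x
  set z := Q⁻¹ *ᵥ x
  have hPy : P *ᵥ y = x := by rw [mulVec_mulVec, mul_nonsing_inv _ hP, one_mulVec]
  have hQz : Q *ᵥ z = x := by
    rw [mulVec_mulVec, mul_nonsing_inv _ (isUnit_iff_isUnit_det Q |>.mp hQ.isUnit), one_mulVec]
  have hQt : Qᵀ = Q := by
    simpa only [conjTranspose_eq_transpose_of_trivial] using hQ.isHermitian.eq
  have hQsymm : z ⬝ᵥ Q *ᵥ y = y ⬝ᵥ x := by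
    rw [dotProduct_mulVec, ← hQt, vecMul_transpose, hQz, dotProduct_comm]
  -- `0 ≤ Q[c y - z] = c² Q[y] - 2c ⟪y, x⟫ + ⟪z, x⟫`, and `c Q[y] ≤ P[y] = ⟪y, x⟫`
  have hnonneg : 0 ≤ (c • y - z) ⬝ᵥ Q *ᵥ (c • y - z) := by
    simpa using hQ.posSemidef.dotProduct_mulVec_nonneg (c • y - z)
  have hy : c * (y ⬝ᵥ Q *ᵥ y) ≤ y ⬝ᵥ x := hPy ▸ hle y
  simp only [mulVec_sub, mulVec_smul, sub_dotProduct, dotProduct_sub, smul_dotProduct,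
    dotProduct_smul, smul_eq_mul, hQz, hQsymm] at hnonneg
  rw [dotProduct_comm x y, dotProduct_comm x z]
  nlinarith [mul_le_mul_of_nonneg_left hy hc, dotProduct_comm z x]

theorem one_le_of_rpow_eq_mul_rpow {p u v t : ℝ} (hp : 0 < p) (hp2 : p ≤ 2) (hu : 0 < u)
    (hv : 0 < v) (ht : 0 < t) (heq : u ^ (1 - 2 / p) = t * v ^ (1 - 2 / p))
    (hle : t ^ (p / 2) * u ≤ v) : 1 ≤ t := by
  have he : 1 - 2 / p ≤ 0 := by
    rw [sub_nonpos, le_div_iff₀ hp]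
    linarith
  have key : v ^ (1 - 2 / p) ≤ t ^ (p / 2) * v ^ (1 - 2 / p) :=
    calc v ^ (1 - 2 / p) ≤ (t ^ (p / 2) * u) ^ (1 - 2 / p) :=
          Real.rpow_le_rpow_of_nonpos (by positivity) hle he
      _ = t ^ (p / 2 * (1 - 2 / p) + 1) * v ^ (1 - 2 / p) := by
          rw [Real.mul_rpow (by positivity) hu.le, ← Real.rpow_mul ht.le, heq,
            Real.rpow_add_one ht.ne']
          ring
      _ = t ^ (p / 2) * v ^ (1 - 2 / p) := by
          congr 2
          field_simp
          ring
  have h1 : 1 ≤ t ^ (p / 2) :=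
    le_of_mul_le_mul_right (by simpa using key) (Real.rpow_pos_of_pos hv _)
  by_contra ht1
  exact (Real.rpow_lt_one ht.le (not_le.mp ht1) (by positivity)).not_ge h1

noncomputable def lewisGram (p : ℝ) {n d : ℕ} (A : Matrix (Fin n) (Fin d) ℝ) (w : Fin n → ℝ) :
    Matrix (Fin d) (Fin d) ℝ :=
  Aᵀ * diagonal (fun t => w t ^ (1 - 2 / p)) * A

theorem lewisGram_diagonal_mul (p : ℝ) {n d : ℕ} (A : Matrix (Fin n) (Fin d) ℝ) (s w : Fin n → ℝ) :
    lewisGram p (diagonal s * A) w = Aᵀ * diagonal (fun t => s t ^ 2 * w t ^ (1 - 2 / p)) * A := by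
  rw [lewisGram, transpose_mul, diagonal_transpose, Matrix.mul_assoc Aᵀ, diagonal_mul_diagonal,
    ← Matrix.mul_assoc, Matrix.mul_assoc Aᵀ, diagonal_mul_diagonal]
  congr 3 with t
  ring

namespace IsLewisWeights

variable {p : ℝ} {n d : ℕ} {A : Matrix (Fin n) (Fin d) ℝ} {w s wA wB : Fin n → ℝ}

theorem pos (hw : IsLewisWeights p A w) (i : Fin n) : 0 < w i := hw.1 i

theorem eq_rpow (hw : IsLewisWeights p A w) (i : Fin n) :
    w i = (A i ⬝ᵥ (lewisGram p A w)⁻¹ *ᵥ A i) ^ (p / 2) :=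
  hw.2 i

theorem posDef_lewisGram (hp : p ≠ 0) (hw : IsLewisWeights p A w) (i : Fin n) :
    (lewisGram p A w).PosDef := by
  have hpsd : (lewisGram p A w).PosSemidef := by
    simpa only [lewisGram, conjTranspose_eq_transpose_of_trivial] using
      (posSemidef_diagonal_iff.mpr fun t => (Real.rpow_pos_of_pos (hw.pos t) _).le)
        |>.conjTranspose_mul_mul_same A
  refine hpsd.posDef_iff_isUnit.mpr ((isUnit_iff_isUnit_det _).mpr ?_)
  by_contra hdet
  have hwi := hw.eq_rpow i
  rw [nonsing_inv_apply_not_isUnit _ hdet, zero_mulVec, dotProduct_zero,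
    Real.zero_rpow (div_ne_zero hp two_ne_zero)] at hwi
  exact (hw.pos i).ne' hwi

theorem row_ne_zero (hp : p ≠ 0) (hw : IsLewisWeights p A w) (i : Fin n) : A i ≠ 0 := by
  intro hi
  have hwi := hw.eq_rpow i
  rw [hi, zero_dotProduct, Real.zero_rpow (div_ne_zero hp two_ne_zero)] at hwi
  exact (hw.pos i).ne' hwi

theorem rpow_mul_le_of_diagonal_mul_of_le (hp : 0 < p) (hwA : IsLewisWeights p A wA)
    (hwB : IsLewisWeights p (diagonal s * A) wB) {κ : ℝ} (hκ : 0 ≤ κ)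
    (hle : ∀ i, κ * (s i ^ 2 * wB i ^ (1 - 2 / p)) ≤ wA i ^ (1 - 2 / p)) (i : Fin n) :
    (κ * s i ^ 2) ^ (p / 2) * wA i ≤ wB i := by
  have hM := hwA.posDef_lewisGram hp.ne' i
  have hN := hwB.posDef_lewisGram hp.ne' i
  have hquad : ∀ x, κ * (x ⬝ᵥ lewisGram p (diagonal s * A) wB *ᵥ x) ≤
      x ⬝ᵥ lewisGram p A wA *ᵥ x := by
    intro x
    rw [lewisGram_diagonal_mul, lewisGram, dotProduct_mulVec_transpose_mul_diagonal_mul,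
      dotProduct_mulVec_transpose_mul_diagonal_mul, Finset.mul_sum]
    refine Finset.sum_le_sum fun t _ => ?_
    rw [← mul_assoc]
    exact mul_le_mul_of_nonneg_right (hle t) (sq_nonneg _)
  have hinv := mul_dotProduct_inv_mulVec_le_s7 ((isUnit_iff_isUnit_det _).mp hM.isUnit) hN hκ
    hquad (A i)
  have hrow : (diagonal s * A) i = s i • A i := by
    ext k
    simp [diagonal_mul]
  have hA_nonneg : 0 ≤ A i ⬝ᵥ (lewisGram p A wA)⁻¹ *ᵥ A i := by
    simpa using hM.inv.posSemidef.dotProduct_mulVec_nonneg (A i)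
  rw [hwA.eq_rpow i, hwB.eq_rpow i, hrow, ← Real.mul_rpow (by positivity) hA_nonneg]
  refine Real.rpow_le_rpow (by positivity) ?_ (by positivity)
  simp only [smul_dotProduct, mulVec_smul, dotProduct_smul, smul_eq_mul]
  nlinarith [mul_le_mul_of_nonneg_left hinv (sq_nonneg (s i))]

theorem rpow_mul_le_of_diagonal_mul (hp : 0 < p) (hp2 : p ≤ 2) (hs0 : ∀ i, 0 ≤ s i)
    (hs1 : ∀ i, s i ≤ 1) (hwA : IsLewisWeights p A wA)
    (hwB : IsLewisWeights p (diagonal s * A) wB) (i : Fin n) :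
    s i ^ p * wA i ≤ wB i := by
  have hs : ∀ i, 0 < s i := fun i => (hs0 i).lt_of_ne fun h => hwB.row_ne_zero hp.ne' i <| by
    ext k
    simp [diagonal_mul, ← h]
  have : Nonempty (Fin n) := ⟨i⟩
  obtain ⟨i₀, hi₀⟩ :=
    Finite.exists_min fun i => wA i ^ (1 - 2 / p) / (s i ^ 2 * wB i ^ (1 - 2 / p))
  set κ := wA i₀ ^ (1 - 2 / p) / (s i₀ ^ 2 * wB i₀ ^ (1 - 2 / p))
  have hden : ∀ i, 0 < s i ^ 2 * wB i ^ (1 - 2 / p) := fun i =>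
    mul_pos (pow_pos (hs i) 2) (Real.rpow_pos_of_pos (hwB.pos i) _)
  have hκ : 0 < κ := div_pos (Real.rpow_pos_of_pos (hwA.pos i₀) _) (hden i₀)
  have bound := hwA.rpow_mul_le_of_diagonal_mul_of_le hp hwB hκ.le fun i =>
    (le_div_iff₀ (hden i)).mp (hi₀ i)
  have hκs : 1 ≤ κ * s i₀ ^ 2 := by
    refine one_le_of_rpow_eq_mul_rpow hp hp2 (hwA.pos i₀) (hwB.pos i₀)
      (mul_pos hκ (pow_pos (hs i₀) 2)) ?_ (bound i₀)
    rw [mul_assoc, div_mul_cancel₀ _ (hden i₀).ne']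
  have hκ1 : 1 ≤ κ := hκs.trans (mul_le_of_le_one_right hκ.le (pow_le_one₀ (hs0 _) (hs1 _)))
  calc s i ^ p * wA i = (s i ^ 2) ^ (p / 2) * wA i := by
        rw [← Real.rpow_natCast, ← Real.rpow_mul (hs0 i)]
        congr 2
        ring
    _ ≤ (κ * s i ^ 2) ^ (p / 2) * wA i :=
        mul_le_mul_of_nonneg_right (Real.rpow_le_rpow (sq_nonneg _)
          (le_mul_of_one_le_left (sq_nonneg _) hκ1) (by positivity)) (hwA.pos i).le
    _ ≤ wB i := bound i

end IsLewisWeights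

theorem stmt_7_general {n d : ℕ} (p : ℝ) (hp1 : 1 ≤ p) (hp2 : p ≤ 2)
    (A : Matrix (Fin n) (Fin d) ℝ)
    (α : ℝ) (hα0 : 0 ≤ α) (hα1 : α ≤ 1) (j : Fin n)
    (B : Matrix (Fin n) (Fin d) ℝ)
    (hB : B = A.updateRow j (α • A j))
    (wA : Fin n → ℝ) (hwA : IsLewisWeights p A wA)
    (wB : Fin n → ℝ) (hwB : IsLewisWeights p B wB) :
    ∀ i, i ≠ j → wA i ≤ wB i := by
  intro i hij
  set s : Fin n → ℝ := Function.update 1 j α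
  have hBs : B = diagonal s * A := by
    ext k l
    by_cases hk : k = j <;> simp [hB, s, diagonal_mul, updateRow_apply, hk]
  have hs0 : ∀ k, 0 ≤ s k := fun k => by
    by_cases hk : k = j <;> simp [s, hk, hα0]
  have hs1 : ∀ k, s k ≤ 1 := fun k => by
    by_cases hk : k = j <;> simp [s, hk, hα1]
  simpa [s, hij] using
    hwA.rpow_mul_le_of_diagonal_mul (by linarith) hp2 hs0 hs1 (hBs ▸ hwB) i

/-- Rescaling row `j` of `A` by a factor `α ∈ [0,1]` does not decrease the Lewis weights
of the other rows. -/
theorem stmt_7 {n d : ℕ} (p : ℝ) (hp1 : 1 ≤ p) (hp2 : p ≤ 2)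
    (A : Matrix (Fin n) (Fin d) ℝ) (hA : A.rank = d)
    (α : ℝ) (hα0 : 0 ≤ α) (hα1 : α ≤ 1) (j : Fin n)
    (B : Matrix (Fin n) (Fin d) ℝ)
    (hB : B = A.updateRow j (α • A j))
    (wA : Fin n → ℝ) (hwA : IsLewisWeights p A wA)
    (wB : Fin n → ℝ) (hwB : IsLewisWeights p B wB) :
    ∀ i, i ≠ j → wA i ≤ wB i :=
  stmt_7_general p hp1 hp2 A α hα0 hα1 j B hB wA hwA wB hwB
end

section
/- Let $A \in \mathbb{R}^{n \times d}$, let $A^{(i)}$ denote the matrix of the first $i$ rows, and suppose each $A^{(i)}$ (for $i \ge 1$) has full column rank. Let $\sigma_{\min}$ and singular value decompositions be as usual, and let $\tau$ be the leverage score of row $a_{i+1}$ in $A^{(i+1)}$. Let $\sigma^* = \min_{i} \sigma_{\min}(A^{(i)})$. Then $\frac{1}{8}\min\{a_{i+1}^\top (A^{(i)\top} A^{(i)} + \lambda I_d)^{-1} a_{i+1}, 1\} \le a_{i+1}^\top (A^{(i+1)\top} A^{(i+1)} + (\sigma^*)^2 I_d)^{-1} a_{i+1}$ for every $0 < \lambda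 < (\sigma^*)^2$. -/
/-!
Put `M = A⁽ⁱ⁾ᵀA⁽ⁱ⁾ + λI`, `N = A⁽ⁱ⁺¹⁾ᵀA⁽ⁱ⁺¹⁾ + σ*²I` and `s = aᵀM⁻¹a`, where `a = a_{i+1}`.
Since `σ*² ≤ σ_min(A⁽ⁱ⁺¹⁾)²`, the ridge term of `N` is dominated by its Gram term, so
`N ≼ 2 A⁽ⁱ⁺¹⁾ᵀA⁽ⁱ⁺¹⁾ = 2 (A⁽ⁱ⁾ᵀA⁽ⁱ⁾ + aaᵀ) ≼ 2 (M + aaᵀ)`. Evaluating the variational formula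
`aᵀN⁻¹a = max_x (2 aᵀx - xᵀNx)` at `x = M⁻¹a / (2 (1 + s))`, the maximiser for `2 (M + aaᵀ)` by
Sherman–Morrison, gives `aᵀN⁻¹a ≥ s / (2 (1 + s)) ≥ min(s, 1) / 4`.
-/

open Matrix

/-- The smallest singular value of a matrix with full column rank: the minimum of `‖Mx‖₂`
over unit vectors `x`. -/
noncomputable def sigmaMin {m d : ℕ} (M : Matrix (Fin m) (Fin d) ℝ) : ℝ :=
  sInf {s : ℝ | ∃ x : Fin d → ℝ, (∑ k, (x k) ^ 2) = 1 ∧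
    s = Real.sqrt (∑ k, (M.mulVec x k) ^ 2)}

namespace Matrix

variable {m n R : Type*} [Fintype m] [Fintype n]

lemma dotProduct_transpose_mul_self_add_smul_one_mulVec [CommSemiring R] [DecidableEq n]
    (D : Matrix m n R) (t : R) (x : n → R) :
    x ⬝ᵥ (Dᵀ * D + t • 1) *ᵥ x = ∑ k, (D *ᵥ x) k ^ 2 + t * ∑ k, x k ^ 2 := by
  rw [add_mulVec, dotProduct_add, ← mulVec_mulVec, dotProduct_transpose_mulVec, smul_mulVec,
    one_mulVec, dotProduct_smul, smul_eq_mul]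
  simp only [dotProduct, sq, Finset.mul_sum]

lemma posDef_transpose_mul_self_add_smul_one [DecidableEq n] (D : Matrix m n ℝ) {t : ℝ}
    (ht : 0 < t) : (Dᵀ * D + t • 1).PosDef :=
  PosDef.posSemidef_add (posSemidef_conjTranspose_mul_self D) (PosDef.one.smul ht)

lemma PosDef.mulVec_inv_mulVec [DecidableEq n] {N : Matrix n n ℝ} (hN : N.PosDef) (v : n → ℝ) :
    N *ᵥ (N⁻¹ *ᵥ v) = v := by
  rw [mulVec_mulVec, mul_nonsing_inv _ ((isUnit_iff_isUnit_det N).mp hN.isUnit), one_mulVec]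

lemma PosDef.two_mul_dotProduct_sub_le_dotProduct_inv_mulVec_s8 [DecidableEq n] {N : Matrix n n ℝ}
    (hN : N.PosDef) (a x : n → ℝ) : 2 * (a ⬝ᵥ x) - x ⬝ᵥ N *ᵥ x ≤ a ⬝ᵥ N⁻¹ *ᵥ a := by
  set y := N⁻¹ *ᵥ a
  have hNy : N *ᵥ y = a := hN.mulVec_inv_mulVec a
  have hsq : 0 ≤ (x - y) ⬝ᵥ N *ᵥ (x - y) := by
    simpa using hN.posSemidef.dotProduct_mulVec_nonneg (x - y)
  have hyx : y ⬝ᵥ N *ᵥ x = a ⬝ᵥ x := by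
    rw [← (isHermitian_iff_isSymm.mp hN.isHermitian).eq, dotProduct_transpose_mulVec, hNy,
      dotProduct_comm]
  rw [mulVec_sub, hNy, dotProduct_sub, sub_dotProduct, sub_dotProduct, hyx,
    dotProduct_comm x a, dotProduct_comm y a] at hsq
  linarith

lemma PosDef.dotProduct_inv_mulVec_nonneg [DecidableEq n] {M : Matrix n n ℝ} (hM : M.PosDef)
    (a : n → ℝ) : 0 ≤ a ⬝ᵥ M⁻¹ *ᵥ a := by
  simpa using hM.inv.posSemidef.dotProduct_mulVec_nonneg a

lemma PosDef.min_div_four_le_dotProduct_inv_mulVec [DecidableEq n] {M N : Matrix n n ℝ}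
    (hM : M.PosDef) (hN : N.PosDef) (a : n → ℝ)
    (hNM : ∀ x, x ⬝ᵥ N *ᵥ x ≤ 2 * (x ⬝ᵥ M *ᵥ x + (a ⬝ᵥ x) ^ 2)) :
    min (a ⬝ᵥ M⁻¹ *ᵥ a) 1 / 4 ≤ a ⬝ᵥ N⁻¹ *ᵥ a := by
  set s := a ⬝ᵥ M⁻¹ *ᵥ a
  have hs : 0 ≤ s := hM.dotProduct_inv_mulVec_nonneg a
  set c := (2 * (1 + s))⁻¹
  have hc : c * (2 * (1 + s)) = 1 := inv_mul_cancel₀ (by positivity)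
  set x := c • (M⁻¹ *ᵥ a)
  have hMx : M *ᵥ x = c • a := by rw [mulVec_smul, hM.mulVec_inv_mulVec]
  have hax : a ⬝ᵥ x = c * s := by rw [dotProduct_smul, smul_eq_mul]
  have hxMx : x ⬝ᵥ M *ᵥ x = c * (c * s) := by
    rw [hMx, dotProduct_smul, smul_eq_mul, dotProduct_comm, hax]
  have hlower := hN.two_mul_dotProduct_sub_le_dotProduct_inv_mulVec_s8 a x
  have hupper := hNM x
  rw [hax] at hlower hupper
  rw [hxMx] at hupper
  have hquad : 2 * (c * (c * s) + (c * s) ^ 2) = c * s := by linear_combination (c * s) * hc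
  have hcs : c * s ≤ a ⬝ᵥ N⁻¹ *ᵥ a := by linarith
  rcases le_total s 1 with h | h
  · rw [min_eq_left h]; nlinarith
  · rw [min_eq_right h]; nlinarith

end Matrix

lemma sigmaMin_nonneg {m d : ℕ} (M : Matrix (Fin m) (Fin d) ℝ) : 0 ≤ sigmaMin M :=
  Real.sInf_nonneg (by rintro _ ⟨x, -, rfl⟩; exact Real.sqrt_nonneg _)

lemma sum_sq_smul {ι : Type*} [Fintype ι] (c : ℝ) (v : ι → ℝ) :
    ∑ k, (c • v) k ^ 2 = c ^ 2 * ∑ k, v k ^ 2 := by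
  simp only [Pi.smul_apply, smul_eq_mul, mul_pow, Finset.mul_sum]

lemma sigmaMin_sq_mul_sum_sq_le {m d : ℕ} (M : Matrix (Fin m) (Fin d) ℝ) (x : Fin d → ℝ) :
    sigmaMin M ^ 2 * ∑ k, x k ^ 2 ≤ ∑ k, (M *ᵥ x) k ^ 2 := by
  rcases (Finset.sum_nonneg fun k _ => sq_nonneg (x k)).eq_or_lt with hx | hx
  · rw [← hx, mul_zero]; exact Finset.sum_nonneg fun k _ => sq_nonneg _
  set r := Real.sqrt (∑ k, x k ^ 2)
  have hr2 : r⁻¹ ^ 2 = (∑ k, x k ^ 2)⁻¹ := by rw [inv_pow, Real.sq_sqrt hx.le]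
  have hunit : ∑ k, (r⁻¹ • x) k ^ 2 = 1 := by rw [sum_sq_smul, hr2, inv_mul_cancel₀ hx.ne']
  have hbdd : BddBelow {s : ℝ | ∃ x : Fin d → ℝ, (∑ k, (x k) ^ 2) = 1 ∧
      s = Real.sqrt (∑ k, (M.mulVec x k) ^ 2)} :=
    ⟨0, by rintro _ ⟨y, -, rfl⟩; exact Real.sqrt_nonneg _⟩
  have hle : sigmaMin M ≤ Real.sqrt (∑ k, (M *ᵥ (r⁻¹ • x)) k ^ 2) :=
    csInf_le hbdd ⟨_, hunit, rfl⟩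
  rw [Real.le_sqrt (sigmaMin_nonneg M) (Finset.sum_nonneg fun k _ => sq_nonneg _), mulVec_smul,
    sum_sq_smul, hr2, inv_mul_eq_div, le_div_iff₀ hx] at hle
  exact hle

lemma sum_sq_mulVec_submatrix_castLE_succ {R : Type*} [Semiring R] {n d i : ℕ}
    (A : Matrix (Fin n) (Fin d) R) (hi : i + 1 ≤ n) (x : Fin d → R) :
    ∑ k, (A.submatrix (Fin.castLE hi) id *ᵥ x) k ^ 2 =
      ∑ k, (A.submatrix (Fin.castLE (Nat.le_of_succ_le hi)) id *ᵥ x) k ^ 2 + (A ⟨i, hi⟩ ⬝ᵥ x) ^ 2 :=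
  Fin.sum_univ_castSucc _

theorem stmt_8_general {n d : ℕ} (A : Matrix (Fin n) (Fin d) ℝ)
    (σstar : ℝ)
    (hσ : IsLeast {s : ℝ | ∃ (i : ℕ) (h1 : 1 ≤ i) (h2 : i ≤ n),
      s = sigmaMin (A.submatrix (Fin.castLE h2) id)} σstar)
    (lam : ℝ) (hlam0 : 0 < lam) (hlam : lam < σstar ^ 2)
    (i : ℕ) (hi : i + 1 ≤ n) :
    (1 / 8) * min (A ⟨i, hi⟩ ⬝ᵥ
        (((A.submatrix (Fin.castLE (Nat.le_of_succ_le hi)) id)ᵀ *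
            A.submatrix (Fin.castLE (Nat.le_of_succ_le hi)) id +
          lam • (1 : Matrix (Fin d) (Fin d) ℝ))⁻¹).mulVec (A ⟨i, hi⟩)) 1 ≤
      A ⟨i, hi⟩ ⬝ᵥ
        (((A.submatrix (Fin.castLE hi) id)ᵀ * A.submatrix (Fin.castLE hi) id +
          (σstar ^ 2) • (1 : Matrix (Fin d) (Fin d) ℝ))⁻¹).mulVec (A ⟨i, hi⟩) := by
  set a := A ⟨i, hi⟩
  set B := A.submatrix (Fin.castLE (Nat.le_of_succ_le hi)) id
  set C := A.submatrix (Fin.castLE hi) id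
  have hσ0 : 0 ≤ σstar := by
    obtain ⟨j, -, hj, rfl⟩ := hσ.1
    exact sigmaMin_nonneg _
  have hσC : σstar ^ 2 ≤ sigmaMin C ^ 2 :=
    pow_le_pow_left₀ hσ0 (hσ.2 ⟨i + 1, by omega, hi, rfl⟩) 2
  have hNM : ∀ x, x ⬝ᵥ (Cᵀ * C + σstar ^ 2 • 1) *ᵥ x ≤
      2 * (x ⬝ᵥ (Bᵀ * B + lam • 1) *ᵥ x + (a ⬝ᵥ x) ^ 2) := by
    intro x
    have hx : 0 ≤ ∑ k, x k ^ 2 := Finset.sum_nonneg fun k _ => sq_nonneg (x k)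
    have hCx := sigmaMin_sq_mul_sum_sq_le C x
    have hsplit := sum_sq_mulVec_submatrix_castLE_succ A hi x
    simp only [dotProduct_transpose_mul_self_add_smul_one_mulVec]
    linarith [mul_le_mul_of_nonneg_right hσC hx, mul_nonneg hlam0.le hx]
  have hM := posDef_transpose_mul_self_add_smul_one B hlam0
  have hN := posDef_transpose_mul_self_add_smul_one C (hlam0.trans hlam)
  have hmin := hM.min_div_four_le_dotProduct_inv_mulVec hN a hNM
  have hmin_nonneg := le_min (hM.dotProduct_inv_mulVec_nonneg a) zero_le_one
  linarith

/-- For `0 < λ < (σ*)²`, the online ridge leverage score with regularization `λ` is at most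
`8` times the ridge leverage score of the same row in `A^{(i+1)}` with regularization `(σ*)²`. -/
theorem stmt_8 {n d : ℕ} (A : Matrix (Fin n) (Fin d) ℝ)
    (hrank : ∀ (i : ℕ) (h1 : 1 ≤ i) (h2 : i ≤ n), (A.submatrix (Fin.castLE h2) id).rank = d)
    (σstar : ℝ)
    (hσ : IsLeast {s : ℝ | ∃ (i : ℕ) (h1 : 1 ≤ i) (h2 : i ≤ n),
      s = sigmaMin (A.submatrix (Fin.castLE h2) id)} σstar)
    (lam : ℝ) (hlam0 : 0 < lam) (hlam : lam < σstar ^ 2)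
    (i : ℕ) (hi : i + 1 ≤ n) :
    (1 / 8) * min (A ⟨i, hi⟩ ⬝ᵥ
        (((A.submatrix (Fin.castLE (Nat.le_of_succ_le hi)) id)ᵀ *
            A.submatrix (Fin.castLE (Nat.le_of_succ_le hi)) id +
          lam • (1 : Matrix (Fin d) (Fin d) ℝ))⁻¹).mulVec (A ⟨i, hi⟩)) 1 ≤
      A ⟨i, hi⟩ ⬝ᵥ
        (((A.submatrix (Fin.castLE hi) id)ᵀ * A.submatrix (Fin.castLE hi) id +
          (σstar ^ 2) • (1 : Matrix (Fin d) (Fin d) ℝ))⁻¹).mulVec (A ⟨i, hi⟩) :=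
  stmt_8_general A σstar hσ lam hlam0 hlam i hi
end
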